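/- Let g be a Lie algebra over a field k, let n ≥ 2, and let r : g → n_n(k) be a wide homomorphism. Then the commutant of r in the strictly upper triangular matrices is exactly the line spanned by the matrix unit E_{1,n}: {A ∈ n_n(k) : A·r(v) = r(v)·A for all v ∈ g} = k·E_{1,n}. -/

import Mathlib

attribute [local instance 100] LieRing.ofAssociativeRing

/-!
Let `A` be strictly upper triangular and commute with every `r v`. If `A` vanishes on the first
`d` superdiagonals, comparing the `(i, i + d + 2)` entries of `A * r v` and `r v * A` gives
`A i (i + d + 1) * λ_{i + d + 1} = A (i + 1) (i + d + 2) * λ_i`, so by the pairwise independence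
of the superdiagonal functionals both coefficients vanish. Every entry of the `(d + 1)`-st
superdiagonal occurs in such a relation as long as `d + 3 ≤ n`, so by induction `A` vanishes
everywhere except at the corner `(0, n - 1)`. Conversely `E_{1,n}` is annihilated on both sides
by strictly upper triangular matrices.
-/

namespace Matrix

section LinearOrder

variable {ι R : Type*} [LinearOrder ι]

theorem mul_apply_eq_of_lt_of_gt [Fintype ι] [NonUnitalNonAssocSemiring R] {A B : Matrix ι ι R}
    {i j m : ι} (hA : ∀ l < m, A i l = 0) (hB : ∀ l, m < l → B l j = 0) :
    (A * B) i j = A i m * B m j := by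
  rw [mul_apply]
  refine Finset.sum_eq_single m (fun l _ hl => ?_) (by simp)
  rcases lt_or_gt_of_ne hl with h | h
  · rw [hA l h, zero_mul]
  · rw [hB l h, mul_zero]

variable [DecidableEq ι]

theorem single_apply_eq_zero_of_le [Zero R] {i₀ j₀ : ι} (h : i₀ < j₀) (c : R) {i j : ι}
    (hji : j ≤ i) : single i₀ j₀ c i j = 0 :=
  single_apply_of_ne _ _ _ _ _ fun ⟨hi, hj⟩ => (hji.trans_lt (hi ▸ hj ▸ h)).false

variable [Fintype ι] [NonUnitalNonAssocSemiring R] {B : Matrix ι ι R}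

theorem single_mul_eq_zero_of_isTop (hB : ∀ i j, j ≤ i → B i j = 0) (i : ι) {j : ι}
    (hj : IsTop j) (c : R) : single i j c * B = 0 := by
  ext a b
  by_cases ha : a = i
  · subst ha
    rw [single_mul_apply_same, hB j b (hj b), mul_zero, zero_apply]
  · exact single_mul_apply_of_ne _ _ _ _ _ ha _

theorem mul_single_eq_zero_of_isBot (hB : ∀ i j, j ≤ i → B i j = 0) {i : ι} (hi : IsBot i)
    (j : ι) (c : R) : B * single i j c = 0 := by
  ext a b
  by_cases hb : b = j
  · subst hb
    rw [mul_single_apply_same, hB a i (hi a), zero_mul, zero_apply]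
  · exact mul_single_apply_of_ne _ _ _ _ _ hb _

theorem single_mul_eq_mul_single (hB : ∀ i j, j ≤ i → B i j = 0) {i j : ι} (hi : IsBot i)
    (hj : IsTop j) (c : R) : single i j c * B = B * single i j c := by
  rw [single_mul_eq_zero_of_isTop hB i hj, mul_single_eq_zero_of_isBot hB hi]

end LinearOrder

variable {n : ℕ}

def VanishesNearDiag {R : Type*} [Zero R] (d : ℕ) (A : Matrix (Fin n) (Fin n) R) : Prop :=
  ∀ i j : Fin n, (j : ℕ) ≤ i + d → A i j = 0

theorem vanishesNearDiag_zero_iff {R : Type*} [Zero R] {A : Matrix (Fin n) (Fin n) R} :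
    VanishesNearDiag 0 A ↔ ∀ i j, j ≤ i → A i j = 0 := by
  simp only [VanishesNearDiag, add_zero, Fin.val_fin_le]

theorem VanishesNearDiag.apply_mul_apply_eq_of_mul_comm {R : Type*} [NonUnitalNonAssocSemiring R]
    {A B : Matrix (Fin n) (Fin n) R} {d : ℕ} (hA : VanishesNearDiag d A)
    (hB : ∀ i j, j ≤ i → B i j = 0) (hAB : A * B = B * A) {i p m j : Fin n}
    (hp : (p : ℕ) = i + 1) (hm : (m : ℕ) = i + d + 1) (hj : (j : ℕ) = m + 1) :
    A i m * B m j = B i p * A p j := by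
  have h := congr_fun₂ hAB i j
  rwa [mul_apply_eq_of_lt_of_gt (m := m), mul_apply_eq_of_lt_of_gt (m := p)] at h
  · exact fun l hl => hB i l (Fin.le_def.mpr (by omega))
  · exact fun l hl => hA l j (by omega)
  · exact fun l hl => hA i l (by omega)
  · exact fun l hl => hB l j (Fin.le_def.mpr (by omega))

section Field

variable {k ι : Type*} [Field k]

/-- Pairwise linear independence of the superdiagonal functionals `λ_i = (R · i (i + 1))`. -/
def SuperdiagIndependent (R : ι → Matrix (Fin n) (Fin n) k) : Prop :=
  ∀ i p j q : Fin n, (p : ℕ) = i + 1 → (q : ℕ) = j + 1 → i ≠ j →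
    ∀ a b : k, (∀ v, a * R v i p + b * R v j q = 0) → a = 0 ∧ b = 0

variable {R : ι → Matrix (Fin n) (Fin n) k} {A : Matrix (Fin n) (Fin n) k}

theorem VanishesNearDiag.succ (hR : ∀ v i j, j ≤ i → R v i j = 0)
    (hind : SuperdiagIndependent R) (hAR : ∀ v, A * R v = R v * A) {d : ℕ}
    (hA : VanishesNearDiag d A) (hd : d + 3 ≤ n) : VanishesNearDiag (d + 1) A := by
  have hpair : ∀ {i p m j : Fin n}, (p : ℕ) = i + 1 → (m : ℕ) = i + d + 1 →
      (j : ℕ) = m + 1 → A i m = 0 ∧ A p j = 0 := by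
    intro i p m j hp hm hj
    have h := hind m j i p hj hp (Fin.ne_of_val_ne (by omega)) (A i m) (-A p j) fun v => by
      rw [hA.apply_mul_apply_eq_of_mul_comm (hR v) (hAR v) hp hm hj]
      ring
    exact ⟨h.1, neg_eq_zero.mp h.2⟩
  intro i j hij
  by_cases hnear : (j : ℕ) ≤ i + d
  · exact hA i j hnear
  by_cases hjn : (j : ℕ) + 1 < n
  · exact (hpair (p := ⟨i + 1, by omega⟩) (j := ⟨j + 1, hjn⟩) rfl (by omega) rfl).1
  -- in the last column, `A i j` is the second coefficient of the relation one row higher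
  · exact (hpair (i := ⟨i - 1, by omega⟩) (m := ⟨i + d, by omega⟩) (by simp; omega)
      (by simp; omega) (by simp; omega)).2

theorem vanishesNearDiag_of_commute (hR : ∀ v i j, j ≤ i → R v i j = 0)
    (hind : SuperdiagIndependent R) (hA : ∀ i j, j ≤ i → A i j = 0)
    (hAR : ∀ v, A * R v = R v * A) : ∀ d, d + 2 ≤ n → VanishesNearDiag d A
  | 0, _ => vanishesNearDiag_zero_iff.mpr hA
  | d + 1, hd => (vanishesNearDiag_of_commute hR hind hA hAR d (by omega)).succ hR hind hAR hd

end Field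

theorem VanishesNearDiag.eq_smul_single {R : Type*} [MulZeroOneClass R]
    {A : Matrix (Fin n) (Fin n) R} (hA : VanishesNearDiag (n - 2) A) {i₀ j₀ : Fin n}
    (hi₀ : (i₀ : ℕ) = 0) (hj₀ : (j₀ : ℕ) = n - 1) :
    A = A i₀ j₀ • single i₀ j₀ (1 : R) := by
  ext i j
  by_cases hcorner : i = i₀ ∧ j = j₀
  · obtain ⟨rfl, rfl⟩ := hcorner
    simp
  · rw [smul_apply, single_apply_of_ne (h := fun h => hcorner ⟨h.1.symm, h.2.symm⟩), smul_zero]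
    exact hA i j (by grind)

end Matrix

/-- Let `r : g → n_n(k)` be a wide homomorphism with `n ≥ 2`.  Then the
commutant of `r` in the strictly upper triangular matrices is exactly the line spanned by the
matrix unit `E_{1,n}`. -/
theorem stmt_11 {k : Type*} [Field k] {g : Type*} [LieRing g] [LieAlgebra k g] {n : ℕ}
    (hn : 2 ≤ n)
    (r : g →ₗ⁅k⁆ Matrix (Fin n) (Fin n) k)
    (hr : ∀ (v : g) (i j : Fin n), j ≤ i → r v i j = 0)
    (hwide : ∀ (i j : ℕ) (hi : i + 1 < n) (hj : j + 1 < n), i ≠ j →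
      ∀ a b : k,
        (∀ v : g,
          a * r v ⟨i, by omega⟩ ⟨i + 1, hi⟩ + b * r v ⟨j, by omega⟩ ⟨j + 1, hj⟩ = 0) →
        a = 0 ∧ b = 0) :
    {A : Matrix (Fin n) (Fin n) k |
        (∀ i j : Fin n, j ≤ i → A i j = 0) ∧ ∀ v : g, A * r v = r v * A} =
      {A : Matrix (Fin n) (Fin n) k | ∃ c : k,
        A = c • Matrix.single (⟨0, by omega⟩ : Fin n) (⟨n - 1, by omega⟩ : Fin n)
          (1 : k)} := by
  have hind : Matrix.SuperdiagIndependent (n := n) (fun v => r v) := by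
    rintro ⟨i, hi⟩ ⟨p, hp⟩ ⟨j, hj⟩ ⟨q, hq⟩ (rfl : p = i + 1) (rfl : q = j + 1) hij
    exact hwide i j hp hq (fun h => hij (Fin.ext h))
  ext A
  constructor
  · rintro ⟨hA, hAR⟩
    have hnear := Matrix.vanishesNearDiag_of_commute hr hind hA hAR (n - 2) (by omega)
    exact ⟨_, hnear.eq_smul_single rfl rfl⟩
  · rintro ⟨c, rfl⟩
    have hcorner : (⟨0, by omega⟩ : Fin n) < ⟨n - 1, by omega⟩ :=
      Fin.mk_lt_mk.mpr (by omega)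
    refine ⟨fun i j hji => ?_, fun v => ?_⟩
    · rw [Matrix.smul_apply, Matrix.single_apply_eq_zero_of_le hcorner _ hji, smul_zero]
    · rw [smul_mul_assoc, mul_smul_comm, Matrix.single_mul_eq_mul_single (hr v)
        (fun a => Fin.mk_le_of_le_val (Nat.zero_le _))
        (fun b => Fin.le_def.mpr (Nat.le_sub_one_of_lt b.isLt))]
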